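/- arXiv:1801.00814 — 3 statements merged into one kernel-verified Lean document; each statement's English description precedes it below -/
import Mathlib

section
/- For j ≤ n, the identity ∑_{i=1}^{j} (n-i)! · (j-1)! / (j-i)! = n! / (n-j+1) holds. -/
/-- For `1 ≤ j ≤ n`, the identity
`∑_{i=1}^{j} (n-i)!·(j-1)!/(j-i)! = n!/(n-j+1)` holds. -/
theorem factorial_sum_identity (n j : ℕ) (hj : 1 ≤ j) (hjn : j ≤ n) :
    ∑ i ∈ Finset.Icc 1 j,
        (((n - i).factorial * (j - 1).factorial : ℕ) : ℚ) / ((j - i).factorial : ℕ)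
      = ((n.factorial : ℕ) : ℚ) / ((n - j + 1 : ℕ) : ℚ) := by
  have key : ∀ i ∈ Finset.Icc 1 j,
      (((n - i).factorial * (j - 1).factorial : ℕ) : ℚ) / ((j - i).factorial : ℕ)
        = (((n - i).choose (n - j) : ℕ) : ℚ) * ((n - j).factorial : ℚ)
            * ((j - 1).factorial : ℚ) := by
    intro i hi
    simp only [Finset.mem_Icc] at hi
    have h1 : n - j ≤ n - i := Nat.sub_le_sub_left hi.2 n
    have h2 : (n - i) - (n - j) = j - i := by omega
    have hfac := Nat.choose_mul_factorial_mul_factorial h1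
    rw [h2] at hfac
    have hne : ((j - i).factorial : ℚ) ≠ 0 := by positivity
    rw [← hfac]
    push_cast
    field_simp
  rw [Finset.sum_congr rfl key]
  rw [← Finset.sum_mul, ← Finset.sum_mul]
  have hre : ∑ i ∈ Finset.Icc 1 j, (((n - i).choose (n - j) : ℕ) : ℚ)
      = ∑ m ∈ Finset.Icc (n - j) (n - 1), ((m.choose (n - j) : ℕ) : ℚ) := by
    apply Finset.sum_nbij' (fun i => n - i) (fun m => n - m)
    · intro i hi; simp only [Finset.mem_Icc] at *; omega
    · intro m hm; simp only [Finset.mem_Icc] at *; omega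
    · intro i hi; simp only [Finset.mem_Icc] at hi; omega
    · intro m hm; simp only [Finset.mem_Icc] at hm; omega
    · intro i hi; rfl
  rw [hre]
  have hstick : ∑ m ∈ Finset.Icc (n - j) (n - 1), m.choose (n - j)
      = n.choose (n - j + 1) := by
    rw [Nat.sum_Icc_choose]
    congr 1
    omega
  have hsum : ∑ m ∈ Finset.Icc (n - j) (n - 1), ((m.choose (n - j) : ℕ) : ℚ)
      = ((n.choose (n - j + 1) : ℕ) : ℚ) := by
    rw [← Nat.cast_sum]
    exact_mod_cast congrArg (Nat.cast (R := ℚ)) hstick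
  rw [hsum]
  have h3 : n - j + 1 ≤ n := by omega
  have hfac := Nat.choose_mul_factorial_mul_factorial h3
  have h4 : n - (n - j + 1) = j - 1 := by omega
  rw [h4, Nat.factorial_succ] at hfac
  have hne : ((n - j + 1 : ℕ) : ℚ) ≠ 0 := by positivity
  have hq : ((n.choose (n - j + 1) : ℚ)) * (((n - j + 1 : ℕ) : ℚ)
      * ((n - j).factorial : ℚ)) * ((j - 1).factorial : ℚ) = (n.factorial : ℚ) := by
    exact_mod_cast congrArg (Nat.cast (R := ℚ)) hfac
  rw [eq_div_iff hne]
  linear_combination hq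
end

section
/- In the classical secretary problem with n candidates and threshold strategy parameter v (reject the first v−1 candidates, then accept the first candidate better than all previous ones), the probability of selecting the best candidate equals ((v−1)/n) · ∑_{i=v}^{n} 1/(i−1) (for v ≥ 2), and for v = 1 it equals 1/n. -/
open scoped Classical

/-- Success of the threshold strategy with parameter `v`: positions are
`1,…,n` (position `t` is the `Fin n` index `t-1`), `π t` is the rank of the
candidate arriving at position `t` (larger = better).  The strategy rejects the
first `v-1` candidates and then accepts the first candidate better than all
previous ones; success means the accepted candidate is the overall best. -/
def secretarySuccess (n v : ℕ) (π : Equiv.Perm (Fin n)) : Prop :=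
  ∃ t : Fin n,
    v ≤ t.val + 1 ∧                                  -- `t` is not rejected outright
    (∀ s : Fin n, s < t → π s < π t) ∧               -- `t` beats all previous ones
    (∀ s : Fin n, v ≤ s.val + 1 → s < t →
      ∃ u : Fin n, u < s ∧ π u > π s) ∧              -- no earlier candidate accepted
    (∀ s : Fin n, π s ≤ π t)                          -- `t` is the overall best

lemma fiber_card_eq (m : ℕ) (t b b' : Fin (m+1)) :
    (Finset.univ.filter (fun π : Equiv.Perm (Fin (m+1)) => π t = b)).card =
    (Finset.univ.filter (fun π : Equiv.Perm (Fin (m+1)) => π t = b')).card := by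
  apply Finset.card_bij' (fun π _ => Equiv.swap b b' * π) (fun π _ => Equiv.swap b b' * π)
  · intro π hπ
    simp only [Finset.mem_filter, Finset.mem_univ, true_and] at hπ ⊢
    simp [hπ]
  · intro π hπ
    simp only [Finset.mem_filter, Finset.mem_univ, true_and] at hπ ⊢
    simp [hπ, Equiv.swap_apply_right]
  · intro π _; simp [← mul_assoc]
  · intro π _; simp [← mul_assoc]

lemma fiber_card (m : ℕ) (t b : Fin (m+1)) :
    (Finset.univ.filter (fun π : Equiv.Perm (Fin (m+1)) => π t = b)).card = m.factorial := by
  have h1 : (Finset.univ : Finset (Equiv.Perm (Fin (m+1)))).card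
      = ∑ c : Fin (m+1), (Finset.univ.filter (fun π : Equiv.Perm (Fin (m+1)) => π t = c)).card :=
    Finset.card_eq_sum_card_fiberwise (fun π _ => Finset.mem_univ _)
  rw [Finset.card_univ, Fintype.card_perm, Fintype.card_fin] at h1
  have h2 : ∀ c : Fin (m+1),
      (Finset.univ.filter (fun π : Equiv.Perm (Fin (m+1)) => π t = c)).card
      = (Finset.univ.filter (fun π : Equiv.Perm (Fin (m+1)) => π t = b)).card :=
    fun c => fiber_card_eq m t c b
  rw [Finset.sum_congr rfl (fun c _ => h2 c), Finset.sum_const, Finset.card_univ,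
    Fintype.card_fin, smul_eq_mul, Nat.factorial_succ] at h1
  exact (Nat.eq_of_mul_eq_mul_left (Nat.succ_pos m) h1.symm)


def Amax (m : ℕ) (t s : Fin (m+1)) : Finset (Equiv.Perm (Fin (m+1))) :=
  Finset.univ.filter (fun π => π t = Fin.last m ∧ ∀ u, u < t → u ≠ s → π u < π s)

lemma Amax_swap_mem (m : ℕ) (t s s' : Fin (m+1)) (hs : s < t) (hs' : s' < t)
    (π : Equiv.Perm (Fin (m+1))) (hπ : π ∈ Amax m t s) :
    π * Equiv.swap s s' ∈ Amax m t s' := by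
  simp only [Amax, Finset.mem_filter, Finset.mem_univ, true_and] at hπ ⊢
  obtain ⟨h1, h2⟩ := hπ
  have hts : t ≠ s := ne_of_gt hs
  have hts' : t ≠ s' := ne_of_gt hs'
  constructor
  · simp [Equiv.swap_apply_of_ne_of_ne hts hts', h1]
  · intro u hu hus'
    simp only [Equiv.Perm.mul_apply, Equiv.swap_apply_right]
    rcases eq_or_ne u s with rfl | hus
    · rw [Equiv.swap_apply_left]
      exact h2 s' hs' (fun h => hus' (h ▸ rfl))
    · rw [Equiv.swap_apply_of_ne_of_ne hus hus']
      exact h2 u hu hus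

lemma Amax_card_eq (m : ℕ) (t s s' : Fin (m+1)) (hs : s < t) (hs' : s' < t) :
    (Amax m t s).card = (Amax m t s').card := by
  apply Finset.card_bij' (fun π _ => π * Equiv.swap s s') (fun π _ => π * Equiv.swap s s')
  · exact fun π hπ => Amax_swap_mem m t s s' hs hs' π hπ
  · exact fun π hπ => by
      simpa [Equiv.swap_comm s s'] using Amax_swap_mem m t s' s hs' hs π hπ
  · intro π _; simp [mul_assoc]
  · intro π _; simp [mul_assoc]

lemma fiber_eq_biUnion (m : ℕ) (t : Fin (m+1)) (ht : 0 < t.val) :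
    Finset.univ.filter (fun π : Equiv.Perm (Fin (m+1)) => π t = Fin.last m) =
      (Finset.univ.filter (fun s => s < t)).biUnion (fun s => Amax m t s) := by
  ext π
  simp only [Finset.mem_filter, Finset.mem_univ, true_and, Finset.mem_biUnion, Amax]
  constructor
  · intro h1
    have hne : (Finset.univ.filter (fun s : Fin (m+1) => s < t)).Nonempty := by
      refine ⟨⟨0, Nat.succ_pos m⟩, ?_⟩
      simp only [Finset.mem_filter, Finset.mem_univ, true_and, Fin.lt_def]
      exact ht
    obtain ⟨s, hsmem, hmax⟩ := Finset.exists_max_image _ (fun u => π u) hne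
    simp only [Finset.mem_filter, Finset.mem_univ, true_and] at hsmem
    refine ⟨s, by simp [hsmem], h1, fun u hu hus => ?_⟩
    have := hmax u (by simp [hu])
    exact lt_of_le_of_ne this (fun h => hus (π.injective h))
  · rintro ⟨s, _, h1, _⟩
    exact h1

lemma Amax_disjoint (m : ℕ) (t s s' : Fin (m+1)) (hs : s < t) (hs' : s' < t) (hne : s ≠ s') :
    Disjoint (Amax m t s) (Amax m t s') := by
  rw [Finset.disjoint_left]
  intro π h1 h2
  simp only [Amax, Finset.mem_filter, Finset.mem_univ, true_and] at h1 h2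
  exact absurd (h1.2 s' hs' hne.symm) (not_lt.mpr (le_of_lt (h2.2 s hs hne)))

lemma Amax_card (m : ℕ) (t s : Fin (m+1)) (hs : s < t) :
    t.val * (Amax m t s).card = m.factorial := by
  have ht : 0 < t.val := lt_of_le_of_lt (Nat.zero_le _) hs
  have h1 := fiber_eq_biUnion m t ht
  have h2 : (Finset.univ.filter (fun π : Equiv.Perm (Fin (m+1)) => π t = Fin.last m)).card
      = ∑ s' ∈ Finset.univ.filter (fun s' => s' < t), (Amax m t s').card := by
    rw [h1]
    apply Finset.card_biUnion
    intro a ha b hb hab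
    simp only [Finset.mem_coe, Finset.mem_filter, Finset.mem_univ, true_and] at ha hb
    exact Amax_disjoint m t a b ha hb hab
  rw [fiber_card] at h2
  have h3 : ∀ s' ∈ Finset.univ.filter (fun s' : Fin (m+1) => s' < t),
      (Amax m t s').card = (Amax m t s).card := by
    intro s' hs'
    simp only [Finset.mem_filter, Finset.mem_univ, true_and] at hs'
    exact Amax_card_eq m t s' s hs' hs
  rw [Finset.sum_congr rfl h3, Finset.sum_const, smul_eq_mul] at h2
  have h4 : (Finset.univ.filter (fun s' : Fin (m+1) => s' < t)) = Finset.Iio t := by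
    ext u; simp
  rw [h4, Fin.card_Iio] at h2
  omega

lemma top_of_success (m : ℕ) (π : Equiv.Perm (Fin (m+1))) (t : Fin (m+1))
    (h4 : ∀ s : Fin (m+1), π s ≤ π t) : π t = Fin.last m := by
  have := h4 (π.symm (Fin.last m))
  simp only [Equiv.apply_symm_apply] at this
  exact le_antisymm (Fin.le_last _) this

lemma success_filter_eq (m v : ℕ) (hv : 2 ≤ v) (hvn : v ≤ m+1) :
    Finset.univ.filter (secretarySuccess (m+1) v) =
      (Finset.univ.filter (fun t : Fin (m+1) => v ≤ t.val + 1)).biUnion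
        (fun t => (Finset.univ.filter (fun s : Fin (m+1) => s.val + 1 < v)).biUnion
          (fun s => Amax m t s)) := by
  ext π
  simp only [Finset.mem_filter, Finset.mem_univ, true_and, Finset.mem_biUnion, Amax]
  constructor
  · rintro ⟨t, h1, h2, h3, h4⟩
    have htop : π t = Fin.last m := top_of_success m π t h4
    have ht0 : 0 < t.val := by omega
    have hne : (Finset.univ.filter (fun s : Fin (m+1) => s < t)).Nonempty := by
      refine ⟨⟨0, Nat.succ_pos m⟩, ?_⟩
      simp only [Finset.mem_filter, Finset.mem_univ, true_and, Fin.lt_def]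
      exact ht0
    obtain ⟨s, hsmem, hmax⟩ := Finset.exists_max_image _ (fun u => π u) hne
    simp only [Finset.mem_filter, Finset.mem_univ, true_and] at hsmem
    have hsv : s.val + 1 < v := by
      by_contra h
      obtain ⟨u, hu, hu2⟩ := h3 s (by omega) hsmem
      have hut : u ∈ Finset.univ.filter (fun x : Fin (m+1) => x < t) := by
        simp only [Finset.mem_filter, Finset.mem_univ, true_and]
        exact lt_trans hu hsmem
      exact absurd (hmax u hut) (not_le.mpr hu2)
    refine ⟨t, h1, s, hsv, htop, fun u hu hus => ?_⟩
    have := hmax u (by simp only [Finset.mem_filter, Finset.mem_univ, true_and]; exact hu)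
    exact lt_of_le_of_ne this (fun h => hus (π.injective h))
  · rintro ⟨t, ht, s, hs, htop, hargmax⟩
    have hst : s < t := by rw [Fin.lt_def]; omega
    refine ⟨t, ht, fun u hu => ?_, fun u hu1 hu2 => ⟨s, ?_, ?_⟩, fun u => htop ▸ Fin.le_last _⟩
    · rw [htop]
      exact lt_of_le_of_ne (Fin.le_last _)
        (fun h => absurd (π.injective (h.trans htop.symm)) (ne_of_lt hu))
    · rw [Fin.lt_def]; omega
    · exact hargmax u hu2 (by rw [ne_eq, Fin.ext_iff]; omega)

lemma success_filter_eq_one (m : ℕ) :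
    Finset.univ.filter (secretarySuccess (m+1) 1) =
      Finset.univ.filter (fun π : Equiv.Perm (Fin (m+1)) => π 0 = Fin.last m) := by
  ext π
  simp only [Finset.mem_filter, Finset.mem_univ, true_and]
  constructor
  · rintro ⟨t, _, _, h3, h4⟩
    have htop : π t = Fin.last m := top_of_success m π t h4
    have ht0 : t = 0 := by
      by_contra h
      have : (0 : Fin (m+1)) < t := by
        rw [Fin.lt_def]
        have := Fin.val_ne_of_ne h
        simp only [Fin.val_zero] at this ⊢
        omega
      obtain ⟨u, hu, _⟩ := h3 0 (by omega) this
      exact absurd hu (by simp [Fin.lt_def])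
    rw [← ht0]; exact htop
  · intro h
    refine ⟨0, le_refl _, fun s hs => absurd hs (by simp [Fin.lt_def]),
      fun s _ hs => absurd hs (by simp [Fin.lt_def]), fun s => ?_⟩
    rw [h]; exact Fin.le_last _

/-- The probability that the threshold strategy with parameter `v` selects the
best of `n` candidates equals `((v-1)/n)·∑_{i=v}^{n} 1/(i-1)` for `v ≥ 2`,
and equals `1/n` for `v = 1`. -/
theorem secretary_threshold_probability (n v : ℕ) (hn : 1 ≤ n)
    (hv : 1 ≤ v) (hvn : v ≤ n) :
    (2 ≤ v →
      (((Finset.univ : Finset (Equiv.Perm (Fin n))).filter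
          (secretarySuccess n v)).card : ℚ) / (n.factorial : ℚ)
        = (((v - 1 : ℕ) : ℚ) / (n : ℚ)) *
            ∑ i ∈ Finset.Icc v n, 1 / (((i - 1 : ℕ) : ℚ))) ∧
    (v = 1 →
      (((Finset.univ : Finset (Equiv.Perm (Fin n))).filter
          (secretarySuccess n v)).card : ℚ) / (n.factorial : ℚ) = 1 / (n : ℚ)) := by
  obtain ⟨m, rfl⟩ : ∃ m, n = m + 1 := ⟨n - 1, by omega⟩
  constructor
  · intro hv2
    set T := Finset.univ.filter (fun t : Fin (m+1) => v ≤ t.val + 1) with hT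
    set S := Finset.univ.filter (fun s : Fin (m+1) => s.val + 1 < v) with hS
    -- cardinality of S
    have hScard : S.card = v - 1 := by
      have : S = Finset.Iio (⟨v - 1, by omega⟩ : Fin (m+1)) := by
        ext s
        simp only [hS, Finset.mem_filter, Finset.mem_univ, true_and, Finset.mem_Iio, Fin.lt_def]
        omega
      rw [this, Fin.card_Iio]
    -- the card as a double sum
    have hcard : ((Finset.univ.filter (secretarySuccess (m+1) v)).card : ℚ)
        = ∑ t ∈ T, ∑ s ∈ S, ((Amax m t s).card : ℚ) := by
      rw [success_filter_eq m v hv2 hvn]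
      rw [Finset.card_biUnion]
      · push_cast
        apply Finset.sum_congr rfl
        intro t ht
        rw [Finset.card_biUnion]
        · push_cast; rfl
        · intro a ha b hb hab
          simp only [hS, Finset.mem_coe, Finset.mem_filter, Finset.mem_univ, true_and] at ha hb
          simp only [hT, Finset.mem_filter, Finset.mem_univ, true_and] at ht
          exact Amax_disjoint m t a b (by rw [Fin.lt_def]; omega) (by rw [Fin.lt_def]; omega) hab
      · intro a ha b hb hab
        simp only [Function.onFun]
        rw [Finset.disjoint_left]
        intro π h1 h2
        rw [Finset.mem_biUnion] at h1 h2
        obtain ⟨s1, _, hm1⟩ := h1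
        obtain ⟨s2, _, hm2⟩ := h2
        simp only [Amax, Finset.mem_filter, Finset.mem_univ, true_and] at hm1 hm2
        exact hab (π.injective (hm1.1.trans hm2.1.symm))
    -- evaluate Amax card in ℚ
    have hAmax : ∀ t ∈ T, ∀ s ∈ S, ((Amax m t s).card : ℚ)
        = (m.factorial : ℚ) / (t.val : ℚ) := by
      intro t ht s hs
      simp only [hT, Finset.mem_filter, Finset.mem_univ, true_and] at ht
      simp only [hS, Finset.mem_filter, Finset.mem_univ, true_and] at hs
      have h := Amax_card m t s (by rw [Fin.lt_def]; omega)
      have ht0 : (t.val : ℚ) ≠ 0 := by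
        have : 0 < t.val := by omega
        positivity
      field_simp
      rw [mul_comm]
      exact_mod_cast h
    -- sum reindex
    have hsum : ∑ i ∈ Finset.Icc v (m+1), 1 / (((i - 1 : ℕ) : ℚ))
        = ∑ t ∈ T, 1 / (t.val : ℚ) := by
      apply Finset.sum_bij (fun i hi => (⟨i - 1, by
        simp only [Finset.mem_Icc] at hi; omega⟩ : Fin (m+1)))
      · intro i hi
        simp only [Finset.mem_Icc] at hi
        simp only [hT, Finset.mem_filter, Finset.mem_univ, true_and]
        omega
      · intro i hi j hj h
        simp only [Finset.mem_Icc] at hi hj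
        simp only [Fin.mk.injEq] at h
        omega
      · intro t ht
        simp only [hT, Finset.mem_filter, Finset.mem_univ, true_and] at ht
        refine ⟨t.val + 1, Finset.mem_Icc.mpr ⟨ht, by omega⟩, ?_⟩
        simp [Fin.ext_iff]
      · intro i hi
        simp
    rw [hcard, hsum]
    rw [Finset.sum_div, Finset.mul_sum]
    apply Finset.sum_congr rfl
    intro t ht
    rw [Finset.sum_congr rfl (hAmax t ht), Finset.sum_const, hScard]
    simp only [hT, Finset.mem_filter, Finset.mem_univ, true_and] at ht
    have ht0 : (t.val : ℚ) ≠ 0 := by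
      have : 0 < t.val := by omega
      positivity
    have hm0 : ((m.factorial : ℚ)) ≠ 0 := by positivity
    rw [Nat.factorial_succ]
    push_cast
    field_simp
    rw [nsmul_eq_mul, mul_div_assoc', mul_div_assoc', mul_div_cancel_left₀ _ ht0]
    ring
  · intro hv1
    subst hv1
    rw [success_filter_eq_one m, fiber_card m 0 (Fin.last m), Nat.factorial_succ]
    have hm0 : ((m.factorial : ℚ)) ≠ 0 := by positivity
    push_cast
    field_simp
end

section
/- For a uniformly random permutation π of [n] and a fixed threshold r with 1 ≤ r < n, the probability that a uniformly chosen position j ∈ [n] satisfies 'π(k) > π(j) for all k > j' and j > r equals (1/n) ∑_{j=1}^{n-r} 1/j. -/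
open scoped Classical

open Finset
-- A j a : permutations where π a is strict min on Ici j (a ∈ Ici j)
noncomputable def Aset (n : ℕ) (j a : Fin n) : Finset (Equiv.Perm (Fin n)) :=
  univ.filter (fun π => ∀ k, j ≤ k → k ≠ a → π a < π k)

lemma Aset_card_eq (n : ℕ) (j a : Fin n) (ha : j ≤ a) :
    (Aset n j a).card = (Aset n j j).card := by
  apply Finset.card_bij' (fun π _ => π * Equiv.swap j a) (fun π _ => π * Equiv.swap j a)
  · intro π hπ
    simp only [Aset, mem_filter, mem_univ, true_and] at hπ ⊢
    intro k hk hkj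
    rcases eq_or_ne k a with rfl | hka
    · simp only [Equiv.Perm.mul_apply, Equiv.swap_apply_left, Equiv.swap_apply_right]
      exact hπ j le_rfl (Ne.symm hkj)
    · rw [Equiv.Perm.mul_apply, Equiv.Perm.mul_apply, Equiv.swap_apply_left,
        Equiv.swap_apply_of_ne_of_ne hkj hka]
      exact hπ k hk hka
  · intro π hπ
    simp only [Aset, mem_filter, mem_univ, true_and] at hπ ⊢
    intro k hk hka
    rcases eq_or_ne k j with rfl | hkj
    · simp only [Equiv.Perm.mul_apply, Equiv.swap_apply_left, Equiv.swap_apply_right]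
      exact hπ a ha (Ne.symm hka)
    · rw [Equiv.Perm.mul_apply, Equiv.Perm.mul_apply, Equiv.swap_apply_right,
        Equiv.swap_apply_of_ne_of_ne hkj hka]
      exact hπ k hk hkj
  · intro π _; simp [mul_assoc]
  · intro π _; simp [mul_assoc]

lemma key_count (n : ℕ) (j : Fin n) :
    (Aset n j j).card * (n - j.val) = n.factorial := by
  classical
  have hne : (Finset.Ici j).Nonempty := ⟨j, by simp⟩
  -- fiber map: argmin of π on Ici j
  set t : Equiv.Perm (Fin n) → Fin n :=
    fun π => π.symm (((Finset.Ici j).image π).min' (hne.image π)) with ht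
  have htmem : ∀ π, t π ∈ Finset.Ici j := by
    intro π
    have := Finset.min'_mem (((Finset.Ici j).image π)) (hne.image π)
    rw [Finset.mem_image] at this
    obtain ⟨b, hb, hbe⟩ := this
    simpa [ht, ← hbe] using hb
  have hfiber : ∀ a ∈ Finset.Ici j,
      (univ.filter (fun π => t π = a)).card = (Aset n j a).card := by
    intro a ha
    congr 1
    ext π
    simp only [Aset, mem_filter, mem_univ, true_and]
    constructor
    · intro hta k hk hka
      have hmin : π a ≤ π k := by
        rw [← hta, ht]; simp only [Equiv.apply_symm_apply]
        exact Finset.min'_le _ _ (Finset.mem_image_of_mem π (by simpa using hk))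
      exact lt_of_le_of_ne hmin (fun h => hka (π.injective h).symm)
    · intro h
      have h1 : π a ≤ ((Finset.Ici j).image π).min' (hne.image π) := by
        apply Finset.le_min'
        intro y hy
        rw [Finset.mem_image] at hy
        obtain ⟨b, hb, rfl⟩ := hy
        rcases eq_or_ne b a with rfl | hba
        · exact le_rfl
        · exact (h b (by simpa using hb) hba).le
      have h2 : ((Finset.Ici j).image π).min' (hne.image π) ≤ π a :=
        Finset.min'_le _ _ (Finset.mem_image_of_mem π (by simpa using ha))
      have : ((Finset.Ici j).image π).min' (hne.image π) = π a := le_antisymm h2 h1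
      rw [ht]; simp [this]
  have hcardIci : (Finset.Ici j).card = n - j.val := by
    simp [Fin.card_Ici]
  calc (Aset n j j).card * (n - j.val)
      = ∑ a ∈ Finset.Ici j, (Aset n j a).card := by
        rw [Finset.sum_congr rfl (fun a ha => Aset_card_eq n j a (by simpa using ha))]
        rw [Finset.sum_const, hcardIci]; ring
    _ = ∑ a ∈ Finset.Ici j, (univ.filter (fun π => t π = a)).card := by
        exact (Finset.sum_congr rfl hfiber).symm
    _ = (univ : Finset (Equiv.Perm (Fin n))).card :=
        (Finset.card_eq_sum_card_fiberwise (fun π _ => htmem π)).symm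
    _ = n.factorial := by simp [Fintype.card_perm]

/-- For a uniformly random permutation `π` of `[n]` and a uniformly random
position `j ∈ [n]` (encoded as a pair in `Equiv.Perm (Fin n) × Fin n`, position
`j` being index `j-1`), the probability that `j > r` and `π(k) > π(j)` for all
`k > j` equals `(1/n)·∑_{j=1}^{n-r} 1/j`. -/
theorem secretary_random_position_probability (n r : ℕ)
    (hr : 1 ≤ r) (hrn : r < n) :
    (((Finset.univ : Finset (Equiv.Perm (Fin n) × Fin n)).filter
        (fun p => r ≤ p.2.val ∧ ∀ k : Fin n, p.2 < k → p.1 p.2 < p.1 k)).card : ℚ)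
        / ((n.factorial : ℚ) * (n : ℚ))
      = (1 / (n : ℚ)) * ∑ j ∈ Finset.Icc 1 (n - r), 1 / (j : ℚ) := by
  classical
  have hn : 0 < n := lt_of_le_of_lt (Nat.zero_le r) hrn
  set B := ((Finset.univ : Finset (Equiv.Perm (Fin n) × Fin n)).filter
        (fun p => r ≤ p.2.val ∧ ∀ k : Fin n, p.2 < k → p.1 p.2 < p.1 k)) with hB
  set J := (univ : Finset (Fin n)).filter (fun j => r ≤ j.val) with hJ
  -- fiberwise count over the position
  have hmem : ∀ p ∈ B, p.2 ∈ J := by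
    intro p hp
    simp only [hB, mem_filter] at hp
    simp [hJ, hp.2.1]
  have hcard : B.card = ∑ j ∈ J, (Aset n j j).card := by
    rw [Finset.card_eq_sum_card_fiberwise hmem]
    refine Finset.sum_congr rfl ?_
    intro j hj
    have hrj : r ≤ j.val := by simpa [hJ] using hj
    apply Finset.card_bij (fun p _ => p.1)
    · intro p hp
      simp only [hB, mem_filter, mem_univ, true_and] at hp
      obtain ⟨⟨_, h2⟩, h3⟩ := hp
      subst h3
      simp only [Aset, mem_filter, mem_univ, true_and]
      intro k hk hkj
      exact h2 k (lt_of_le_of_ne hk (Ne.symm hkj))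
    · intro p hp q hq hpq
      simp only [hB, mem_filter] at hp hq
      exact Prod.ext hpq (hp.2 ▸ hq.2 ▸ rfl)
    · intro π hπ
      simp only [Aset, mem_filter, mem_univ, true_and] at hπ
      refine ⟨(π, j), ?_, rfl⟩
      simp only [hB, mem_filter, mem_univ, true_and]
      exact ⟨⟨hrj, fun k hk => hπ k hk.le (ne_of_gt hk)⟩, trivial⟩
  -- rational value of each fiber
  have hval : ∀ j ∈ J, ((Aset n j j).card : ℚ)
      = (n.factorial : ℚ) / ((n - j.val : ℕ) : ℚ) := by
    intro j hj
    have hd : 0 < n - j.val := Nat.sub_pos_of_lt j.isLt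
    have hd' : ((n - j.val : ℕ) : ℚ) ≠ 0 := Nat.cast_ne_zero.mpr hd.ne'
    rw [eq_div_iff hd']
    exact_mod_cast key_count n j
  -- reindexing sum
  have hre : ∑ j ∈ J, (1 : ℚ) / ((n - j.val : ℕ) : ℚ)
      = ∑ i ∈ Finset.Icc 1 (n - r), 1 / (i : ℚ) := by
    apply Finset.sum_nbij' (i := fun j => n - j.val)
      (j := fun i => (⟨n - max i 1, by omega⟩ : Fin n))
    · intro j hj
      have hrj : r ≤ j.val := by simpa [hJ] using hj
      have := j.isLt
      simp only [Finset.mem_Icc]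
      omega
    · intro i hi
      simp only [Finset.mem_Icc] at hi
      simp only [hJ, mem_filter, mem_univ, true_and]
      omega
    · intro j hj
      have hrj : r ≤ j.val := by simpa [hJ] using hj
      have := j.isLt
      apply Fin.ext
      simp only
      omega
    · intro i hi
      simp only [Finset.mem_Icc] at hi
      simp only
      omega
    · intro j hj
      rfl
  -- put it together
  have hfac : (n.factorial : ℚ) ≠ 0 := Nat.cast_ne_zero.mpr n.factorial_ne_zero
  have hnq : (n : ℚ) ≠ 0 := Nat.cast_ne_zero.mpr hn.ne'
  rw [hcard, Nat.cast_sum, Finset.sum_congr rfl hval, Finset.sum_div, ← hre,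
    Finset.mul_sum]
  refine Finset.sum_congr rfl fun j hj => ?_
  have hd : ((n - j.val : ℕ) : ℚ) ≠ 0 := by
    have : 0 < n - j.val := Nat.sub_pos_of_lt j.isLt
    exact_mod_cast this.ne'
  rw [div_div, one_div_mul_one_div,
    div_eq_div_iff (mul_ne_zero hd (mul_ne_zero hfac hnq)) (mul_ne_zero hnq hd)]
  ring
end
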